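/- Let U : ℝⁿ → ℝᵐ be a smooth bounded map such that for some constant C₀ one has |DU(x)| ≤ C₀/|x| and |DU(x)·x| ≤ C₀/|x|² for all |x| ≥ 1, where DU(x)·x denotes the vector with components x_i ∂_i U^α(x). Define u(x,t) := U(x/√(-t)) for t < 0. Then for every δ > 0 there is a constant C(δ, C₀, U) such that u is Lipschitz continuous with constant C(δ, C₀, U) on the region {(x,t) : |x| ≥ δ, -1 ≤ t < 0}; in particular u extends Lipschitz-continuously up to t = 0 on {|x| ≥ δ}. -/

import Mathlib

open Filter Set

noncomputable section

/-- Euclidean space `ℝⁿ`. -/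
abbrev E (n : ℕ) : Type := EuclideanSpace ℝ (Fin n)

private lemma phi_hasDerivAt (t : ℝ) (ht : t < 0) :
    HasDerivAt (fun s : ℝ => (Real.sqrt (-s))⁻¹) (((Real.sqrt (-t))⁻¹) ^ 3 / 2) t := by
  have h0 : (0:ℝ) < -t := by linarith
  have hs : Real.sqrt (-t) ≠ 0 := ne_of_gt (Real.sqrt_pos.2 h0)
  have h1 : HasDerivAt (fun s : ℝ => -s) (-1) t := by
    exact (hasDerivAt_id' t).neg
  have h2 : HasDerivAt (fun s : ℝ => Real.sqrt (-s)) (1 / (2 * Real.sqrt (-t)) * (-1)) t :=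
    (Real.hasDerivAt_sqrt (ne_of_gt h0)).comp t h1
  have h3 := h2.inv hs
  refine h3.congr_deriv ?_
  have hsq : Real.sqrt (-t) ^ 2 = -t := Real.sq_sqrt h0.le
  rw [inv_pow]
  rw [show Real.sqrt (-t) ^ 3 = Real.sqrt (-t) ^ 2 * Real.sqrt (-t) from by ring, hsq]
  field_simp

private lemma one_le_phi (t : ℝ) (h1 : -1 ≤ t) (h2 : t < 0) : 1 ≤ (Real.sqrt (-t))⁻¹ := by
  have h0 : (0:ℝ) < -t := by linarith
  have hr : 0 < Real.sqrt (-t) := Real.sqrt_pos.2 h0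
  have hr1 : Real.sqrt (-t) ≤ 1 := by
    rw [show (1:ℝ) = Real.sqrt 1 from Real.sqrt_one.symm]
    exact Real.sqrt_le_sqrt (by linarith)
  nlinarith [mul_inv_cancel₀ (ne_of_gt hr),
    mul_nonneg (inv_nonneg.2 hr.le) (sub_nonneg.2 hr1)]

private lemma lipschitzOnWith_weaken {α β : Type*} [PseudoEMetricSpace α] [PseudoEMetricSpace β]
    {K K' : NNReal} {f : α → β} {s : Set α} (h : LipschitzOnWith K f s) (hK : K ≤ K') :
    LipschitzOnWith K' f s := fun _ hx _ hy =>
  (h hx hy).trans (mul_le_mul_left (ENNReal.coe_le_coe.2 hK) _)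


set_option maxHeartbeats 1000000 in
/-- **Lipschitz regularity up to `t = 0` away from the origin.**
If `U : ℝⁿ → ℝᵐ` is smooth and bounded with `|DU(x)| ≤ C₀/|x|` and `|DU(x)·x| ≤ C₀/|x|²`
for `|x| ≥ 1`, then `u(x,t) := U(x/√(-t))` is Lipschitz on `{|x| ≥ δ, -1 ≤ t < 0}` for every
`δ > 0` (with constant depending on `δ, C₀, U`); in particular it extends
Lipschitz-continuously up to `t = 0` on `{|x| ≥ δ}`. -/
theorem selfSimilar_lipschitz_up_to_time_zero (n m : ℕ)
    (U : E n → E m) (C₀ : ℝ)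
    (hU : ContDiff ℝ (⊤ : ℕ∞) U)
    (hUbd : ∃ B : ℝ, ∀ x, ‖U x‖ ≤ B)
    (hDU : ∀ x : E n, 1 ≤ ‖x‖ → ‖fderiv ℝ U x‖ ≤ C₀ / ‖x‖)
    (hDUx : ∀ x : E n, 1 ≤ ‖x‖ → ‖fderiv ℝ U x x‖ ≤ C₀ / ‖x‖ ^ 2) :
    ∀ δ : ℝ, 0 < δ →
      ∃ K : NNReal,
        -- u is Lipschitz on {(x,t) : |x| ≥ δ, -1 ≤ t < 0}
        LipschitzOnWith K (fun q : E n × ℝ => U ((Real.sqrt (-q.2))⁻¹ • q.1))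
          {q : E n × ℝ | δ ≤ ‖q.1‖ ∧ -1 ≤ q.2 ∧ q.2 < 0} ∧
        -- u extends Lipschitz-continuously up to t = 0 on {|x| ≥ δ}
        ∃ v : E n × ℝ → E m,
          LipschitzOnWith K v {q : E n × ℝ | δ ≤ ‖q.1‖ ∧ -1 ≤ q.2 ∧ q.2 ≤ 0} ∧
          ∀ q : E n × ℝ, δ ≤ ‖q.1‖ → -1 ≤ q.2 → q.2 < 0 →
            v q = U ((Real.sqrt (-q.2))⁻¹ • q.1) := by

  intro δ hδ
  obtain ⟨B, hB⟩ := hUbd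
  have hB0 : 0 ≤ B := le_trans (norm_nonneg _) (hB 0)
  set C : ℝ := max C₀ 0 with hCdef
  have hC0 : (0:ℝ) ≤ C := le_max_right _ _
  have hDU' : ∀ x : E n, 1 ≤ ‖x‖ → ‖fderiv ℝ U x‖ ≤ C / ‖x‖ := by
    intro x hx
    have hx0 : (0:ℝ) < ‖x‖ := lt_of_lt_of_le one_pos hx
    exact (hDU x hx).trans ((div_le_div_iff_of_pos_right hx0).2 (le_max_left _ _))
  have hDUx' : ∀ x : E n, 1 ≤ ‖x‖ → ‖fderiv ℝ U x x‖ ≤ C / ‖x‖ ^ 2 := by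
    intro x hx
    have hx0 : (0:ℝ) < ‖x‖ ^ 2 := pow_pos (lt_of_lt_of_le one_pos hx) 2
    exact (hDUx x hx).trans ((div_le_div_iff_of_pos_right hx0).2 (le_max_left _ _))
  have hUdiff : ∀ y : E n, HasFDerivAt U (fderiv ℝ U y) y :=
    fun y => (hU.differentiable (by simp) y).hasFDerivAt
  -- global bound on the derivative
  obtain ⟨M₀, hM₀⟩ := (isCompact_closedBall (0 : E n) 1).exists_bound_of_continuousOn
    (hU.continuous_fderiv (by simp)).continuousOn
  set M : ℝ := max M₀ C with hMdef
  have hM0 : (0:ℝ) ≤ M := le_trans hC0 (le_max_right _ _)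
  have hMbd : ∀ y : E n, ‖fderiv ℝ U y‖ ≤ M := by
    intro y
    rcases le_or_gt ‖y‖ 1 with h | h
    · exact le_trans (hM₀ y (by simpa [Metric.mem_closedBall, dist_eq_norm] using h))
        (le_max_left _ _)
    · refine le_trans (hDU' y h.le) (le_trans ?_ (le_max_right M₀ C))
      exact (div_le_self hC0 h.le)
  set K₁ : ℝ := (4 * B + 2 * C + 2 * M) / δ with hK₁def
  set K₂ : ℝ := (C + M) / (2 * δ ^ 2) with hK₂def
  have hK₁0 : 0 ≤ K₁ := by positivity
  have hK₂0 : 0 ≤ K₂ := by positivity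
  -- spatial Lipschitz estimate
  have hspace : ∀ lam : ℝ, 1 ≤ lam → ∀ x x' : E n, δ ≤ ‖x‖ → δ ≤ ‖x'‖ →
      ‖U (lam • x) - U (lam • x')‖ ≤ K₁ * ‖x - x'‖ := by
    intro lam hlam x x' hx hx'
    have hlam0 : (0:ℝ) < lam := lt_of_lt_of_le one_pos hlam
    rcases le_or_gt (δ / 2) ‖x - x'‖ with hd | hd
    · have h1 : ‖U (lam • x) - U (lam • x')‖ ≤ 2 * B := by
        have b1 := hB (lam • x); have b2 := hB (lam • x')
        calc ‖U (lam • x) - U (lam • x')‖ ≤ ‖U (lam • x)‖ + ‖U (lam • x')‖ := norm_sub_le _ _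
          _ ≤ 2 * B := by linarith
      have h2 : 2 * B ≤ K₁ * ‖x - x'‖ := by
        rw [hK₁def, div_mul_eq_mul_div, le_div_iff₀ hδ]
        nlinarith [mul_le_mul_of_nonneg_left hd hB0,
          mul_nonneg hC0 (norm_nonneg (x - x')), mul_nonneg hM0 (norm_nonneg (x - x'))]
      linarith
    · -- every point of the segment between `lam • x` and `lam • x'` has norm ≥ lam * (δ/2)
      have hseg : ∀ z ∈ segment ℝ (lam • x) (lam • x'), lam * (δ / 2) ≤ ‖z‖ := by
        intro z hz
        rw [segment_eq_image'] at hz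
        obtain ⟨θ, hθ, rfl⟩ := hz
        obtain ⟨hθ0, hθ1⟩ := hθ
        have hnd : ‖lam • x' - lam • x‖ = lam * ‖x' - x‖ := by
          rw [← smul_sub, norm_smul, Real.norm_eq_abs, abs_of_pos hlam0]
        have h5 : ‖x' - x‖ < δ / 2 := by rwa [norm_sub_rev]
        have h3 : ‖θ • (lam • x' - lam • x)‖ ≤ lam * ‖x' - x‖ := by
          rw [norm_smul, Real.norm_eq_abs, abs_of_nonneg hθ0, hnd]
          nlinarith [mul_nonneg (mul_nonneg hlam0.le (norm_nonneg (x' - x))) (sub_nonneg.2 hθ1)]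
        have h4 : lam * δ ≤ ‖lam • x‖ := by
          rw [norm_smul, Real.norm_eq_abs, abs_of_pos hlam0]
          nlinarith
        have h6 : ‖lam • x‖ ≤ ‖lam • x + θ • (lam • x' - lam • x)‖
            + ‖θ • (lam • x' - lam • x)‖ := by
          simpa using norm_sub_le (lam • x + θ • (lam • x' - lam • x))
            (θ • (lam • x' - lam • x))
        nlinarith
      have hnd : ‖lam • x - lam • x'‖ = lam * ‖x - x'‖ := by
        rw [← smul_sub, norm_smul, Real.norm_eq_abs, abs_of_pos hlam0]
      rcases le_or_gt 2 (lam * δ) with hl | hl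
      · -- far from the origin: use the decay of DU
        have hb : ∀ z ∈ segment ℝ (lam • x) (lam • x'),
            ‖fderiv ℝ U z‖ ≤ 2 * C / (lam * δ) := by
          intro z hz
          have h1 := hseg z hz
          have h2 : (1:ℝ) ≤ ‖z‖ := by nlinarith
          refine (hDU' z h2).trans ?_
          rw [div_le_div_iff₀ (by nlinarith) (by nlinarith)]
          nlinarith
        have hmv := (convex_segment (lam • x) (lam • x')).norm_image_sub_le_of_norm_hasFDerivWithin_le
          (f' := fun z => fderiv ℝ U z) (fun z _ => (hUdiff z).hasFDerivWithinAt) hb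
          (right_mem_segment ℝ _ _) (left_mem_segment ℝ _ _)
        rw [hnd] at hmv
        refine hmv.trans ?_
        have heq : 2 * C / (lam * δ) * (lam * ‖x - x'‖) = 2 * C / δ * ‖x - x'‖ := by
          field_simp
        rw [heq, hK₁def]
        rw [div_mul_eq_mul_div, div_mul_eq_mul_div, div_le_div_iff₀ hδ hδ]
        nlinarith [mul_nonneg (mul_nonneg hB0 (norm_nonneg (x - x'))) hδ.le,
          mul_nonneg (mul_nonneg hM0 (norm_nonneg (x - x'))) hδ.le]
      · -- close to the origin: use the global bound M
        have hb : ∀ z ∈ segment ℝ (lam • x) (lam • x'), ‖fderiv ℝ U z‖ ≤ M :=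
          fun z _ => hMbd z
        have hmv := (convex_segment (lam • x) (lam • x')).norm_image_sub_le_of_norm_hasFDerivWithin_le
          (f' := fun z => fderiv ℝ U z) (fun z _ => (hUdiff z).hasFDerivWithinAt) hb
          (right_mem_segment ℝ _ _) (left_mem_segment ℝ _ _)
        rw [hnd] at hmv
        refine hmv.trans ?_
        rw [hK₁def, div_mul_eq_mul_div, le_div_iff₀ hδ]
        nlinarith [mul_le_mul_of_nonneg_right hl.le (mul_nonneg hM0 (norm_nonneg (x - x'))),
          mul_nonneg (mul_nonneg hB0 (norm_nonneg (x - x'))) hδ.le,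
          mul_nonneg (mul_nonneg hC0 (norm_nonneg (x - x'))) hδ.le]
  -- temporal Lipschitz estimate
  have htime : ∀ x : E n, δ ≤ ‖x‖ → ∀ t ∈ Ico (-1:ℝ) 0, ∀ t' ∈ Ico (-1:ℝ) 0,
      ‖U ((Real.sqrt (-t))⁻¹ • x) - U ((Real.sqrt (-t'))⁻¹ • x)‖ ≤ K₂ * |t - t'| := by
    intro x hx t ht t' ht'
    have hx0 : (0:ℝ) < ‖x‖ := lt_of_lt_of_le hδ hx
    have key : ∀ s ∈ Ico (-1:ℝ) 0, HasDerivWithinAt (fun s : ℝ => U ((Real.sqrt (-s))⁻¹ • x))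
        (fderiv ℝ U ((Real.sqrt (-s))⁻¹ • x) ((((Real.sqrt (-s))⁻¹) ^ 3 / 2) • x))
        (Ico (-1:ℝ) 0) s := by
      intro s hs
      exact ((hUdiff _).comp_hasDerivAt s
        ((phi_hasDerivAt s hs.2).smul_const x)).hasDerivWithinAt
    have bound : ∀ s ∈ Ico (-1:ℝ) 0,
        ‖fderiv ℝ U ((Real.sqrt (-s))⁻¹ • x) ((((Real.sqrt (-s))⁻¹) ^ 3 / 2) • x)‖ ≤ K₂ := by
      intro s hs
      have h0 : (0:ℝ) < -s := by linarith [hs.2]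
      have hr : 0 < Real.sqrt (-s) := Real.sqrt_pos.2 h0
      set r : ℝ := Real.sqrt (-s) with hrdef
      set φ : ℝ := r⁻¹ with hφdef
      have hφpos : 0 < φ := inv_pos.2 hr
      have hφ1 : 1 ≤ φ := one_le_phi s hs.1 hs.2
      set y : E n := φ • x with hydef
      have hny : ‖y‖ = φ * ‖x‖ := by
        rw [hydef, norm_smul, Real.norm_eq_abs, abs_of_pos hφpos]
      have hxeq : r • y = x := by
        rw [hydef, smul_smul, hφdef, mul_inv_cancel₀ (ne_of_gt hr), one_smul]
      have hxy : fderiv ℝ U y x = r • fderiv ℝ U y y := by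
        rw [← hxeq, map_smul]
      have hgnorm : ‖fderiv ℝ U y ((φ ^ 3 / 2) • x)‖
          = φ ^ 3 / 2 * (r * ‖fderiv ℝ U y y‖) := by
        rw [map_smul, norm_smul, Real.norm_eq_abs, abs_of_pos (by positivity)]
        congr 1
        rw [hxy, norm_smul, Real.norm_eq_abs, abs_of_pos hr]
      rw [hgnorm, hK₂def, le_div_iff₀ (by positivity)]
      have heq : φ ^ 3 * r = φ ^ 2 := by
        have : φ * r = 1 := inv_mul_cancel₀ (ne_of_gt hr)
        nlinarith [this]
      set A : ℝ := ‖fderiv ℝ U y y‖ with hAdef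
      have hA0 : 0 ≤ A := norm_nonneg _
      rcases le_or_gt 1 ‖y‖ with h1 | h1
      · have hA' : A * ‖y‖ ^ 2 ≤ C := by
          have := hDUx' y h1
          rw [le_div_iff₀ (by positivity)] at this
          linarith
        have hA'' : A * (φ * ‖x‖) ^ 2 ≤ C := by rwa [hny] at hA'
        calc φ ^ 3 / 2 * (r * A) * (2 * δ ^ 2) = (φ ^ 3 * r) * (A * δ ^ 2) := by ring
          _ = φ ^ 2 * (A * δ ^ 2) := by rw [heq]
          _ = A * (φ * δ) ^ 2 := by ring
          _ ≤ A * (φ * ‖x‖) ^ 2 := by gcongr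
          _ ≤ C := hA''
          _ ≤ C + M := by linarith
      · have hA : A ≤ M * ‖y‖ := by
          calc A ≤ ‖fderiv ℝ U y‖ * ‖y‖ := (fderiv ℝ U y).le_opNorm y
            _ ≤ M * ‖y‖ := by gcongr; exact hMbd y
        have hφδ : φ * δ ≤ 1 := by
          have h2 : φ * δ ≤ ‖y‖ := by rw [hny]; gcongr
          linarith
        have hφδ0 : 0 ≤ φ * δ := by positivity
        calc φ ^ 3 / 2 * (r * A) * (2 * δ ^ 2) = (φ ^ 3 * r) * (A * δ ^ 2) := by ring
          _ = φ ^ 2 * (A * δ ^ 2) := by rw [heq]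
          _ = (φ * δ) ^ 2 * A := by ring
          _ ≤ (φ * δ) ^ 2 * (M * ‖y‖) := by gcongr
          _ ≤ C + M := by
              have e1 : (φ * δ) ^ 2 ≤ 1 := by nlinarith
              nlinarith [mul_le_mul_of_nonneg_right e1 (mul_nonneg hM0 (norm_nonneg y)),
                mul_le_mul_of_nonneg_left h1.le hM0]
    have hmv := (convex_Ico (-1:ℝ) 0).norm_image_sub_le_of_norm_hasDerivWithin_le
      key bound ht' ht
    rwa [Real.norm_eq_abs] at hmv
  -- combine into a Lipschitz bound on the product region
  have hmain : ∀ p ∈ {q : E n × ℝ | δ ≤ ‖q.1‖ ∧ -1 ≤ q.2 ∧ q.2 < 0},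
      ∀ q ∈ {q : E n × ℝ | δ ≤ ‖q.1‖ ∧ -1 ≤ q.2 ∧ q.2 < 0},
      dist (U ((Real.sqrt (-p.2))⁻¹ • p.1)) (U ((Real.sqrt (-q.2))⁻¹ • q.1))
        ≤ (K₁ + K₂) * dist p q := by
    rintro ⟨x, t⟩ ⟨hx, ht1, ht2⟩ ⟨x', t'⟩ ⟨hx', ht1', ht2'⟩
    simp only at hx ht1 ht2 hx' ht1' ht2' ⊢
    have hφ1 : 1 ≤ (Real.sqrt (-t))⁻¹ := one_le_phi t ht1 ht2
    have hA := hspace _ hφ1 x x' hx hx'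
    have hBt := htime x' hx' t ⟨ht1, ht2⟩ t' ⟨ht1', ht2'⟩
    rw [dist_eq_norm]
    have tri := norm_add_le (U ((Real.sqrt (-t))⁻¹ • x) - U ((Real.sqrt (-t))⁻¹ • x'))
      (U ((Real.sqrt (-t))⁻¹ • x') - U ((Real.sqrt (-t'))⁻¹ • x'))
    rw [sub_add_sub_cancel] at tri
    have hd1 : ‖x - x'‖ ≤ dist ((x, t) : E n × ℝ) (x', t') := by
      rw [Prod.dist_eq]
      exact le_trans (le_of_eq (dist_eq_norm x x').symm) (le_max_left _ _)
    have hd2 : |t - t'| ≤ dist ((x, t) : E n × ℝ) (x', t') := by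
      rw [Prod.dist_eq]
      exact le_trans (le_of_eq (Real.dist_eq t t').symm) (le_max_right _ _)
    nlinarith [mul_le_mul_of_nonneg_left hd1 hK₁0, mul_le_mul_of_nonneg_left hd2 hK₂0]
  set K₀ : NNReal := Real.toNNReal (K₁ + K₂) with hK₀def
  have hK₀ge : K₁ + K₂ ≤ (K₀ : ℝ) := Real.le_coe_toNNReal _
  have hlip : LipschitzOnWith K₀ (fun q : E n × ℝ => U ((Real.sqrt (-q.2))⁻¹ • q.1))
      {q : E n × ℝ | δ ≤ ‖q.1‖ ∧ -1 ≤ q.2 ∧ q.2 < 0} :=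
    LipschitzOnWith.of_dist_le_mul fun p hp q hq =>
      (hmain p hp q hq).trans (mul_le_mul_of_nonneg_right hK₀ge dist_nonneg)
  -- extension to the closed region via coordinatewise Lipschitz extension
  set e := EuclideanSpace.equiv (Fin m) ℝ with hedef
  have h1 : LipschitzOnWith (‖(e : E m →L[ℝ] (Fin m → ℝ))‖₊ * K₀)
      ((e : E m →L[ℝ] (Fin m → ℝ)) ∘ (fun q : E n × ℝ => U ((Real.sqrt (-q.2))⁻¹ • q.1)))
      {q : E n × ℝ | δ ≤ ‖q.1‖ ∧ -1 ≤ q.2 ∧ q.2 < 0} :=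
    (e : E m →L[ℝ] (Fin m → ℝ)).lipschitz.comp_lipschitzOnWith hlip
  obtain ⟨g, hg, hge⟩ := h1.extend_pi
  set Kv : NNReal := ‖(e.symm : (Fin m → ℝ) →L[ℝ] E m)‖₊ * (‖(e : E m →L[ℝ] (Fin m → ℝ))‖₊ * K₀)
    with hKvdef
  have hv : LipschitzWith Kv ((e.symm : (Fin m → ℝ) →L[ℝ] E m) ∘ g) :=
    (e.symm : (Fin m → ℝ) →L[ℝ] E m).lipschitz.comp hg
  have hv' : LipschitzWith (K₀ + Kv) ((e.symm : (Fin m → ℝ) →L[ℝ] E m) ∘ g) :=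
    hv.weaken le_add_self
  refine ⟨K₀ + Kv, lipschitzOnWith_weaken hlip le_self_add, (e.symm : (Fin m → ℝ) →L[ℝ] E m) ∘ g,
    hv'.lipschitzOnWith, ?_⟩
  intro q hq1 hq2 hq3
  have hqS : q ∈ {q : E n × ℝ | δ ≤ ‖q.1‖ ∧ -1 ≤ q.2 ∧ q.2 < 0} := ⟨hq1, hq2, hq3⟩
  have := hge hqS
  simp only [Function.comp_apply] at this ⊢
  rw [← this]
  simp
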